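/- Every predicate extension has a minimal model. Precisely: let L be a first-order language and consider a predicate extension determined by distinct relation symbols p_0,…,p_{k-1} of arities n_0,…,n_{k-1} and positive formulas F_0,…,F_{k-1}, where the free variables of F_j are among x_{j,0},…,x_{j,n_j-1}, and let a DFP-set for it be given (a fixed domain D, fixed interpretations of all function symbols, and fixed interpretations of all relation symbols other than the p_j). Then among the structures in the DFP-set that are models of the predicate extension, there is a least one with respect to the partial order I_0 ≼ I_1 defined by I_0(p_j) ⊆ I_1(p_j) for all j; it is the structure interpreting each p_j as the intersection of the interpretations of p_j over all models in the DFP-set. -/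
import Mathlib


open FirstOrder Language

/-- A positive formula: one built from atomic formulas using only conjunction,
disjunction and existential quantification. -/
inductive FirstOrder.Language.BoundedFormula.IsPositive {L : Language} {α : Type*} :
    {n : ℕ} → L.BoundedFormula α n → Prop
  | equal {n : ℕ} (t₁ t₂ : L.Term (α ⊕ Fin n)) : IsPositive (BoundedFormula.equal t₁ t₂)
  | rel {n l : ℕ} (R : L.Relations l) (ts : Fin l → L.Term (α ⊕ Fin n)) :
      IsPositive (BoundedFormula.rel R ts)
  | inf {n : ℕ} {φ ψ : L.BoundedFormula α n} (hφ : IsPositive φ) (hψ : IsPositive ψ) :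
      IsPositive (φ ⊓ ψ)
  | sup {n : ℕ} {φ ψ : L.BoundedFormula α n} (hφ : IsPositive φ) (hψ : IsPositive ψ) :
      IsPositive (φ ⊔ ψ)
  | ex {n : ℕ} {φ : L.BoundedFormula α (n + 1)} (hφ : IsPositive φ) : IsPositive φ.ex

/-- `I` is a model of the predicate extension given by relation symbols `p_j` and formulas
`F_j`: for every `j`, the set of `n_j`-tuples satisfying `F_j` in `I` is contained in the
interpretation of `p_j` in `I`. -/
def IsModelOfExtension (L : Language) (D : Type*) {k : ℕ} {n : Fin k → ℕ}
    (p : ∀ j, L.Relations (n j)) (F : ∀ j, L.BoundedFormula Empty (n j))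
    (I : L.Structure D) : Prop :=
  ∀ j, {d : Fin (n j) → D | @BoundedFormula.Realize L D I Empty (n j) (F j) Empty.elim d} ⊆
    {d : Fin (n j) → D | @Structure.RelMap L D I (n j) (p j) d}

/-- `I` belongs to the DFP-set determined by the base structure `I₀`: it has the same domain,
the same interpretation of all function symbols, and the same interpretation of all relation
symbols other than the `p_j`. -/
def InDFPSet (L : Language) (D : Type*) {k : ℕ} {n : Fin k → ℕ}
    (p : ∀ j, L.Relations (n j)) (I₀ I : L.Structure D) : Prop :=
  (∀ (m : ℕ) (f : L.Functions m) (v : Fin m → D),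
    @Structure.funMap L D I m f v = @Structure.funMap L D I₀ m f v) ∧
  (∀ (m : ℕ) (r : L.Relations m),
    (∀ j, (⟨m, r⟩ : Σ m, L.Relations m) ≠ ⟨n j, p j⟩) →
    ∀ v : Fin m → D, (@Structure.RelMap L D I m r v ↔ @Structure.RelMap L D I₀ m r v))


lemma term_realize_congr {L : Language} {D : Type*} (I I' : L.Structure D)
    (hfun : ∀ (m : ℕ) (f : L.Functions m) (v : Fin m → D),
      @Structure.funMap L D I m f v = @Structure.funMap L D I' m f v)
    {α : Type*} (t : L.Term α) (v : α → D) :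
    @Term.realize L D I α v t = @Term.realize L D I' α v t := by
  induction t with
  | var => rfl
  | func f ts ih =>
      simp only [Term.realize]
      rw [hfun]
      congr 1
      funext i
      exact ih i


lemma my_realize_inf {L : Language} {D : Type*} (I : L.Structure D) {α : Type*} {m : ℕ}
    (φ ψ : L.BoundedFormula α m) (e : α → D) (d : Fin m → D) :
    @BoundedFormula.Realize L D I α m (φ ⊓ ψ) e d ↔
      @BoundedFormula.Realize L D I α m φ e d ∧ @BoundedFormula.Realize L D I α m ψ e d :=
  BoundedFormula.realize_inf

lemma my_realize_sup {L : Language} {D : Type*} (I : L.Structure D) {α : Type*} {m : ℕ}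
    (φ ψ : L.BoundedFormula α m) (e : α → D) (d : Fin m → D) :
    @BoundedFormula.Realize L D I α m (φ ⊔ ψ) e d ↔
      @BoundedFormula.Realize L D I α m φ e d ∨ @BoundedFormula.Realize L D I α m ψ e d :=
  BoundedFormula.realize_sup

lemma my_realize_ex {L : Language} {D : Type*} (I : L.Structure D) {α : Type*} {m : ℕ}
    (φ : L.BoundedFormula α (m + 1)) (e : α → D) (d : Fin m → D) :
    @BoundedFormula.Realize L D I α m φ.ex e d ↔
      ∃ a : D, @BoundedFormula.Realize L D I α (m + 1) φ e (Fin.snoc d a) :=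
  BoundedFormula.realize_ex

lemma realize_mono {L : Language} {D : Type*} (I I' : L.Structure D)
    (hfun : ∀ (m : ℕ) (f : L.Functions m) (v : Fin m → D),
      @Structure.funMap L D I m f v = @Structure.funMap L D I' m f v)
    (hrel : ∀ (m : ℕ) (r : L.Relations m) (v : Fin m → D),
      @Structure.RelMap L D I m r v → @Structure.RelMap L D I' m r v)
    {α : Type*} {m : ℕ} {φ : L.BoundedFormula α m} (hφ : φ.IsPositive) :
    ∀ (e : α → D) (d : Fin m → D),
      @BoundedFormula.Realize L D I α m φ e d → @BoundedFormula.Realize L D I' α m φ e d := by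
  induction hφ with
  | equal t₁ t₂ =>
      intro e d h
      simp only [BoundedFormula.Realize] at h ⊢
      rw [← term_realize_congr I I' hfun, ← term_realize_congr I I' hfun]
      exact h
  | rel R ts =>
      intro e d h
      simp only [BoundedFormula.Realize] at h ⊢
      have hts : (fun i => @Term.realize L D I _ (Sum.elim e d) (ts i)) =
          (fun i => @Term.realize L D I' _ (Sum.elim e d) (ts i)) :=
        funext fun i => term_realize_congr I I' hfun (ts i) _
      rw [← hts]
      exact hrel _ R _ h
  | inf hφ hψ ihφ ihψ =>
      intro e d h
      have h' := (my_realize_inf I _ _ e d).mp h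
      exact (my_realize_inf I' _ _ e d).mpr ⟨ihφ e d h'.1, ihψ e d h'.2⟩
  | sup hφ hψ ihφ ihψ =>
      intro e d h
      have h' := (my_realize_sup I _ _ e d).mp h
      exact (my_realize_sup I' _ _ e d).mpr
        (h'.elim (fun h => Or.inl (ihφ e d h)) (fun h => Or.inr (ihψ e d h)))
  | ex hφ ih =>
      intro e d h
      obtain ⟨a, ha⟩ := (my_realize_ex I _ e d).mp h
      exact (my_realize_ex I' _ e d).mpr ⟨a, ih e _ ha⟩

/-- Every predicate extension has a minimal model: in any DFP-set (here determined by a base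
structure `I₀`) there is a model `Imin` of the predicate extension that is least, with
respect to the order `I ≼ I'` iff `I(p_j) ⊆ I'(p_j)` for all `j`, among all models of the
predicate extension in the DFP-set; it interprets each `p_j` as the intersection of the
interpretations of `p_j` over all models in the DFP-set. -/
theorem exists_minimal_model (L : Language) (D : Type*)
    {k : ℕ} (n : Fin k → ℕ) (p : ∀ j, L.Relations (n j))
    (hp : Function.Injective fun j => (⟨n j, p j⟩ : Σ m, L.Relations m))
    (F : ∀ j, L.BoundedFormula Empty (n j)) (hF : ∀ j, (F j).IsPositive)
    (I₀ : L.Structure D) :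
    ∃ Imin : L.Structure D, InDFPSet L D p I₀ Imin ∧ IsModelOfExtension L D p F Imin ∧
      (∀ I : L.Structure D, InDFPSet L D p I₀ I → IsModelOfExtension L D p F I →
        ∀ (j : Fin k) (v : Fin (n j) → D),
          @Structure.RelMap L D Imin (n j) (p j) v → @Structure.RelMap L D I (n j) (p j) v) ∧
      (∀ (j : Fin k) (v : Fin (n j) → D),
        @Structure.RelMap L D Imin (n j) (p j) v ↔
          ∀ I : L.Structure D, InDFPSet L D p I₀ I → IsModelOfExtension L D p F I →
            @Structure.RelMap L D I (n j) (p j) v) := by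
  
  classical
  let Imin : L.Structure D :=
    { funMap := fun {m} f v => @Structure.funMap L D I₀ m f v
      RelMap := fun {m} r v =>
        if (∃ j, (⟨m, r⟩ : Σ m, L.Relations m) = ⟨n j, p j⟩) then
          (∀ I : L.Structure D, InDFPSet L D p I₀ I → IsModelOfExtension L D p F I →
            @Structure.RelMap L D I m r v)
        else @Structure.RelMap L D I₀ m r v }
  have hiff : ∀ (j : Fin k) (v : Fin (n j) → D),
      @Structure.RelMap L D Imin (n j) (p j) v ↔
        ∀ I : L.Structure D, InDFPSet L D p I₀ I → IsModelOfExtension L D p F I →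
          @Structure.RelMap L D I (n j) (p j) v := by
    intro j v
    show (if _ then _ else _) ↔ _
    rw [if_pos ⟨j, rfl⟩]
  have hDFP : InDFPSet L D p I₀ Imin := by
    constructor
    · intro m f v; rfl
    · intro m r hr v
      show (if _ then _ else _) ↔ _
      rw [if_neg]
      rintro ⟨j, hj⟩
      exact hr j hj
  have hle : ∀ I : L.Structure D, InDFPSet L D p I₀ I → IsModelOfExtension L D p F I →
      (∀ (m : ℕ) (r : L.Relations m) (v : Fin m → D),
        @Structure.RelMap L D Imin m r v → @Structure.RelMap L D I m r v) := by
    intro I hI hIm m r v h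
    by_cases hc : ∃ j, (⟨m, r⟩ : Σ m, L.Relations m) = ⟨n j, p j⟩
    · have : (∀ I' : L.Structure D, InDFPSet L D p I₀ I' → IsModelOfExtension L D p F I' →
          @Structure.RelMap L D I' m r v) := by
        have h' : (if (∃ j, (⟨m, r⟩ : Σ m, L.Relations m) = ⟨n j, p j⟩) then
            (∀ I' : L.Structure D, InDFPSet L D p I₀ I' → IsModelOfExtension L D p F I' →
              @Structure.RelMap L D I' m r v)
          else @Structure.RelMap L D I₀ m r v) := h
        rwa [if_pos hc] at h'
      exact this I hI hIm
    · have h' : (if (∃ j, (⟨m, r⟩ : Σ m, L.Relations m) = ⟨n j, p j⟩) then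
          (∀ I' : L.Structure D, InDFPSet L D p I₀ I' → IsModelOfExtension L D p F I' →
            @Structure.RelMap L D I' m r v)
        else @Structure.RelMap L D I₀ m r v) := h
      rw [if_neg hc] at h'
      exact (hI.2 m r (fun j hj => hc ⟨j, hj⟩) v).mpr h'
  have hfunle : ∀ I : L.Structure D, InDFPSet L D p I₀ I →
      ∀ (m : ℕ) (f : L.Functions m) (v : Fin m → D),
        @Structure.funMap L D Imin m f v = @Structure.funMap L D I m f v := by
    intro I hI m f v
    exact (hI.1 m f v).symm
  have hmodel : IsModelOfExtension L D p F Imin := by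
    intro j d hd
    rw [Set.mem_setOf_eq, hiff j d]
    intro I hI hIm
    exact hIm j (realize_mono Imin I (hfunle I hI) (hle I hI hIm) (hF j) Empty.elim d hd)
  exact ⟨Imin, hDFP, hmodel, fun I hI hIm j v h => hle I hI hIm _ _ v h, hiff⟩
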